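/- Let B = (1/2) Σ T_{ijk}(λ_+^j λ_+^i λ_-^k + λ_+^k λ_-^i λ_-^j) on the exterior algebra Λ(ℂ^n), with T_{ijk} = −T_{jik}. Then Tr(γ^a γ^b γ^c B) = i 2^{n−2}(T_{abc} + T_{cab} + T_{bca}), where γ^p = −i(λ_+^p − λ_-^p). -/

import Mathlib

open Matrix BigOperators

/-- Exterior multiplication by the basis vector `e^p` on the exterior algebra
`Λ(ℂ^n)`, realized as a matrix on the basis of `Λ(ℂ^n)` indexed by subsets of
`{1,...,n}`, with the standard sign `ε^I_{pJ}`. -/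
noncomputable def lamP (n : ℕ) (p : Fin n) :
    Matrix (Finset (Fin n)) (Finset (Fin n)) ℂ :=
  fun I J => if p ∉ J ∧ I = insert p J then (-1 : ℂ) ^ (J.filter (· < p)).card else 0

/-- The contraction (interior product) with `e_p`: the adjoint of `lamP n p`. -/
noncomputable def lamM (n : ℕ) (p : Fin n) :
    Matrix (Finset (Fin n)) (Finset (Fin n)) ℂ :=
  (lamP n p)ᴴ

/-- `γ^p = -i (λ_+^p - λ_-^p)`. -/
noncomputable def gam (n : ℕ) (p : Fin n) : Matrix (Finset (Fin n)) (Finset (Fin n)) ℂ :=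
  (-Complex.I) • (lamP n p - lamM n p)

/-- `γ̃^p = λ_+^p + λ_-^p`. -/
noncomputable def gamT (n : ℕ) (p : Fin n) : Matrix (Finset (Fin n)) (Finset (Fin n)) ℂ :=
  lamP n p + lamM n p

/-!
The matrices `γ^p`, `λ_+^p`, `λ_-^p` pairwise anticommute to scalars (the canonical
anticommutation relations). Moving the first factor of a product of such matrices through the
others and using cyclicity of the trace gives Wick's theorem: the trace of a product of an even
number of them is `2^n` times the Pfaffian of their half-anticommutators. For `γ^a γ^b γ^c`
times a summand of `B`, the contractions between `λ_+` and `λ_-` cancel between the two halves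
of the summand, leaving `i 2^n / 4 · det (δ_{xy})` with rows `x ∈ (a, b, c)` and columns
`y ∈ (i, j, k)`. This is totally antisymmetric in `(i, j, k)`, so against `T`, antisymmetric in
its first two indices, it sums to `i 2^n / 4 · 2 (T_{abc} + T_{bca} + T_{cab})`.
-/

section Wick
open Finset
variable {ι R : Type*} [CommRing R]

/-- The Pfaffian of `g` on the entries of `l`: the signed sum over perfect matchings of `l` of
the products of `g` over matched pairs, expanded along the first entry. It is `0` when `l` has odd
length. -/
def wickSum (g : ι → ι → R) : List ι → R
  | [] => 1
  | x :: l => ∑ k ∈ range l.length, (-1) ^ k * g x (l.getD k x) * wickSum g (l.eraseIdx k)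
termination_by l => l.length
decreasing_by simp only [List.length_eraseIdx, List.length_cons]; split <;> omega

theorem wickSum_nil (g : ι → ι → R) : wickSum g [] = 1 := by
  rw [wickSum]

theorem wickSum_cons (g : ι → ι → R) (x : ι) (l : List ι) :
    wickSum g (x :: l) =
      ∑ k ∈ range l.length, (-1) ^ k * g x (l.getD k x) * wickSum g (l.eraseIdx k) := by
  rw [wickSum]

theorem mul_prod_map_eq_of_anticomm {A : Type*} [Ring A] [Algebra R A] (X : ι → A)
    (g : ι → ι → R) (hX : ∀ x y, X x * X y + X y * X x = (2 * g x y) • 1) (x : ι) :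
    ∀ l : List ι, X x * (l.map X).prod = (-1 : R) ^ l.length • ((l.map X).prod * X x) +
      ∑ k ∈ range l.length, ((-1) ^ k * (2 * g x (l.getD k x))) • ((l.eraseIdx k).map X).prod
  | [] => by simp
  | y :: l => by
    have hxy : X x * X y = (2 * g x y) • 1 - X y * X x := eq_sub_of_add_eq (hX x y)
    simp only [List.map_cons, List.prod_cons, List.length_cons, sum_range_succ',
      List.getD_cons_succ, List.getD_cons_zero, List.eraseIdx_cons_succ, List.eraseIdx_cons_zero]
    rw [← mul_assoc, hxy, sub_mul, mul_assoc, mul_prod_map_eq_of_anticomm X g hX x l]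
    simp only [mul_add, mul_sum, mul_smul_comm, pow_succ, mul_neg_one, neg_mul, neg_smul,
      sum_neg_distrib, pow_zero, one_mul, mul_assoc, smul_mul_assoc]
    abel

theorem trace_prod_map_eq_wickSum {m : Type*} [Fintype m] [DecidableEq m] [NoZeroDivisors R]
    [NeZero (2 : R)] (X : ι → Matrix m m R) (g : ι → ι → R)
    (hX : ∀ x y, X x * X y + X y * X x = (2 * g x y) • 1) :
    ∀ l : List ι, Even l.length → trace (l.map X).prod = wickSum g l * Fintype.card m
  | [], _ => by simp [wickSum_nil]
  | x :: l, hl => by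
    have hodd : Odd l.length := by simpa [Nat.even_add_one] using hl
    have key := congrArg trace (mul_prod_map_eq_of_anticomm X g hX x l)
    simp only [trace_add, trace_smul, trace_sum, trace_mul_comm _ (X x), hodd.neg_one_pow,
      smul_eq_mul] at key
    have hterm : ∀ k ∈ range l.length, (-1) ^ k * (2 * g x (l.getD k x)) *
        trace ((l.eraseIdx k).map X).prod =
        2 * ((-1) ^ k * g x (l.getD k x) * wickSum g (l.eraseIdx k) * Fintype.card m) := by
      intro k hk
      have hlen : (l.eraseIdx k).length = l.length - 1 := by
        simp [List.length_eraseIdx, mem_range.mp hk]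
      have heven : Even (l.eraseIdx k).length := by
        rw [hlen]; exact Nat.Odd.sub_odd hodd odd_one
      rw [trace_prod_map_eq_wickSum X g hX (l.eraseIdx k) heven]
      ring
    rw [sum_congr rfl hterm, ← mul_sum] at key
    rw [List.map_cons, List.prod_cons, wickSum_cons, sum_mul]
    exact mul_left_cancel₀ two_ne_zero (by linear_combination key)
termination_by l => l.length
decreasing_by simp [List.length_eraseIdx, mem_range.mp hk]

end Wick

namespace ExteriorCAR
variable {n : ℕ}

noncomputable def sgn (S : Finset (Fin n)) (p : Fin n) : ℂ := (-1) ^ (S.filter (· < p)).card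

theorem sgn_mul_self (S : Finset (Fin n)) (p : Fin n) : sgn S p * sgn S p = 1 := by
  rw [sgn, ← pow_add, ← two_mul, pow_mul, neg_one_sq, one_pow]

theorem sgn_insert {S : Finset (Fin n)} {q : Fin n} (hq : q ∉ S) (p : Fin n) :
    sgn (insert q S) p = (if q < p then -1 else 1) * sgn S p := by
  rw [sgn, sgn, Finset.filter_insert]
  split_ifs with h
  · rw [Finset.card_insert_of_notMem (by simp [hq]), pow_succ, mul_comm]
  · rw [one_mul]

theorem sgn_of_mem {S : Finset (Fin n)} {q : Fin n} (hq : q ∈ S) (p : Fin n) :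
    sgn S p = (if q < p then -1 else 1) * sgn (S.erase q) p := by
  conv_lhs => rw [← Finset.insert_erase hq]
  exact sgn_insert (Finset.notMem_erase q S) p

theorem lamP_mul_apply (p : Fin n) (M : Matrix (Finset (Fin n)) (Finset (Fin n)) ℂ)
    (I J : Finset (Fin n)) :
    (lamP n p * M) I J = if p ∈ I then sgn (I.erase p) p * M (I.erase p) J else 0 := by
  rw [mul_apply]
  split_ifs with hp
  · rw [Finset.sum_eq_single (I.erase p)]
    · simp [lamP, sgn, Finset.insert_erase hp]
    · rintro K - hK
      simp only [lamP, ite_mul, zero_mul, ite_eq_right_iff, and_imp]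
      rintro hpK rfl
      exact absurd (Finset.erase_insert hpK).symm hK
    · simp
  · refine Finset.sum_eq_zero fun K _ => ?_
    simp only [lamP, ite_mul, zero_mul, ite_eq_right_iff, and_imp]
    rintro - rfl
    exact absurd (Finset.mem_insert_self p K) hp

theorem lamM_mul_apply (p : Fin n) (M : Matrix (Finset (Fin n)) (Finset (Fin n)) ℂ)
    (I J : Finset (Fin n)) :
    (lamM n p * M) I J = if p ∉ I then sgn I p * M (insert p I) J else 0 := by
  rw [mul_apply]
  by_cases hp : p ∈ I
  · rw [if_neg (not_not.mpr hp)]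
    refine Finset.sum_eq_zero fun K _ => ?_
    simp [lamM, lamP, hp]
  · rw [if_pos hp, Finset.sum_eq_single (insert p I)]
    · simp [lamM, lamP, hp, sgn]
    · rintro K - hK
      simp [lamM, lamP, hK]
    · simp

theorem lamP_apply (p : Fin n) (I J : Finset (Fin n)) :
    lamP n p I J =
      if p ∈ I then sgn (I.erase p) p * (1 : Matrix _ _ ℂ) (I.erase p) J else 0 := by
  rw [← lamP_mul_apply, mul_one]

theorem lamM_apply (p : Fin n) (I J : Finset (Fin n)) :
    lamM n p I J = if p ∉ I then sgn I p * (1 : Matrix _ _ ℂ) (insert p I) J else 0 := by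
  rw [← lamM_mul_apply, mul_one]

theorem lamP_lamP_anticomm (p q : Fin n) : lamP n p * lamP n q + lamP n q * lamP n p = 0 := by
  ext I J
  rw [Matrix.add_apply, lamP_mul_apply, lamP_mul_apply, lamP_apply, lamP_apply, Matrix.zero_apply]
  by_cases hpq : p = q
  · subst hpq
    simp
  by_cases hI : p ∈ I ∧ q ∈ I
  · obtain ⟨hp, hq⟩ := hI
    have hqp : q ∈ I.erase p := Finset.mem_erase.mpr ⟨Ne.symm hpq, hq⟩
    have hpq' : p ∈ I.erase q := Finset.mem_erase.mpr ⟨hpq, hp⟩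
    rw [if_pos hp, if_pos hq, if_pos hqp, if_pos hpq', sgn_of_mem hqp p, sgn_of_mem hpq' q,
      Finset.erase_right_comm (a := q)]
    rcases lt_or_gt_of_ne hpq with h | h <;> simp only [h, h.not_gt, if_true, if_false] <;> ring
  · rw [not_and_or] at hI
    rcases hI with h | h <;> simp [h]

theorem lamM_lamM_anticomm (p q : Fin n) : lamM n p * lamM n q + lamM n q * lamM n p = 0 := by
  simpa [lamM, conjTranspose_mul] using congrArg conjTranspose (lamP_lamP_anticomm q p)

theorem lamP_lamM_anticomm (p q : Fin n) :
    lamP n p * lamM n q + lamM n q * lamP n p = (if p = q then 1 else 0 : ℂ) • 1 := by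
  ext I J
  rw [Matrix.add_apply, lamP_mul_apply, lamM_mul_apply, lamP_apply, lamM_apply, Matrix.smul_apply,
    smul_eq_mul]
  by_cases hpq : p = q
  · subst hpq
    by_cases hp : p ∈ I
    · rw [if_pos hp, if_pos (Finset.notMem_erase p I), if_neg (not_not.mpr hp), add_zero,
        ← mul_assoc, sgn_mul_self, one_mul, Finset.insert_erase hp, if_pos rfl, one_mul]
    · rw [if_neg hp, zero_add, if_pos hp, if_pos (Finset.mem_insert_self p I),
        Finset.erase_insert hp, ← mul_assoc, sgn_mul_self, one_mul, if_pos rfl, one_mul]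
  rw [if_neg hpq, zero_mul]
  by_cases hI : p ∈ I ∧ q ∉ I
  · obtain ⟨hp, hq⟩ := hI
    have hq' : q ∉ I.erase p := fun h => hq (Finset.mem_of_mem_erase h)
    rw [if_pos hp, if_pos hq', if_pos hq, if_pos (Finset.mem_insert_of_mem hp),
      Finset.erase_insert_of_ne (Ne.symm hpq), sgn_of_mem hp q, sgn_insert hq' p]
    rcases lt_or_gt_of_ne hpq with h | h <;> simp only [h, h.not_gt, if_true, if_false] <;> ring
  · rw [not_and_or, not_not] at hI
    rcases hI with h | h <;> simp [h, hpq, Ne.symm hpq]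

open Complex in
theorem gam_anticomm (p : Fin n) (Y : Matrix (Finset (Fin n)) (Finset (Fin n)) ℂ) :
    gam n p * Y + Y * gam n p =
      -I • ((lamP n p * Y + Y * lamP n p) - (lamM n p * Y + Y * lamM n p)) := by
  simp only [gam, smul_mul_assoc, mul_smul_comm, sub_mul, mul_sub]
  module

open Complex in
theorem gam_lamP_anticomm (p q : Fin n) :
    gam n p * lamP n q + lamP n q * gam n p = (if p = q then I else 0) • 1 := by
  rw [gam_anticomm, lamP_lamP_anticomm, add_comm, lamP_lamM_anticomm]
  rcases eq_or_ne p q with rfl | h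
  · simp
  · simp [h, h.symm]

open Complex in
theorem gam_lamM_anticomm (p q : Fin n) :
    gam n p * lamM n q + lamM n q * gam n p = (if p = q then -I else 0) • 1 := by
  rw [gam_anticomm, lamM_lamM_anticomm, lamP_lamM_anticomm]
  by_cases h : p = q <;> simp [h]

theorem gam_gam_anticomm (p q : Fin n) :
    gam n p * gam n q + gam n q * gam n p = (if p = q then 2 else 0 : ℂ) • 1 := by
  rw [gam_anticomm, add_comm, gam_lamP_anticomm, add_comm, gam_lamM_anticomm]
  rcases eq_or_ne p q with rfl | h
  · simp [smul_smul, two_smul]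
  · simp [h, h.symm]

end ExteriorCAR

inductive CarGenerator (n : ℕ)
  | gamma (p : Fin n)
  | plus (p : Fin n)
  | minus (p : Fin n)

namespace CarGenerator
open ExteriorCAR
variable {n : ℕ}

noncomputable def toMatrix : CarGenerator n → Matrix (Finset (Fin n)) (Finset (Fin n)) ℂ
  | gamma p => gam n p
  | plus p => lamP n p
  | minus p => lamM n p

local notation "δ" => (1 : Matrix (Fin n) (Fin n) ℂ)

open Complex in
noncomputable def pairing : CarGenerator n → CarGenerator n → ℂ
  | gamma p, gamma q => δ p q
  | gamma p, plus q | plus q, gamma p => I / 2 * δ p q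
  | gamma p, minus q | minus q, gamma p => -I / 2 * δ p q
  | plus p, minus q | minus q, plus p => δ p q / 2
  | plus _, plus _ | minus _, minus _ => 0

theorem toMatrix_anticomm (x y : CarGenerator n) :
    x.toMatrix * y.toMatrix + y.toMatrix * x.toMatrix = (2 * pairing x y) • 1 := by
  cases x <;> cases y <;>
    simp only [toMatrix, pairing, gam_gam_anticomm, gam_lamP_anticomm, gam_lamM_anticomm,
      lamP_lamP_anticomm, lamM_lamM_anticomm, lamP_lamM_anticomm,
      add_comm (lamP n _ * gam n _), add_comm (lamM n _ * gam n _),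
      add_comm (lamM n _ * lamP n _), mul_zero, zero_smul, one_apply] <;>
    (try split_ifs) <;> module

theorem trace_prod_eq_wickSum (l : List (CarGenerator n)) (hl : Even l.length) :
    trace (l.map toMatrix).prod = wickSum pairing l * 2 ^ n := by
  rw [trace_prod_map_eq_wickSum _ _ toMatrix_anticomm l hl, Fintype.card_finset,
    Fintype.card_fin, Nat.cast_pow, Nat.cast_ofNat]

end CarGenerator

open CarGenerator Complex in
theorem trace_gam_mul_gam_mul_gam_mul_eq_det {n : ℕ} (a b c i j k : Fin n) :
    trace (gam n a * gam n b * gam n c *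
      (lamP n j * lamP n i * lamM n k + lamP n k * lamM n i * lamM n j)) =
      I * 2 ^ n / 4 * det ((1 : Matrix (Fin n) (Fin n) ℂ).submatrix ![a, b, c] ![i, j, k]) := by
  have h1 := trace_prod_eq_wickSum
    [gamma a, gamma b, gamma c, plus j, plus i, minus k] ⟨3, rfl⟩
  have h2 := trace_prod_eq_wickSum
    [gamma a, gamma b, gamma c, plus k, minus i, minus j] ⟨3, rfl⟩
  simp only [List.map_cons, List.map_nil, List.prod_cons, List.prod_nil, toMatrix, mul_one,
    wickSum_cons, List.length_cons, List.length_nil, Finset.sum_range_succ, Finset.sum_range_zero,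
    List.getD_cons_zero, List.getD_cons_succ, List.eraseIdx_cons_zero, List.eraseIdx_cons_succ,
    wickSum_nil, pairing] at h1 h2
  rw [mul_add, trace_add]
  simp only [mul_assoc]
  -- the `λ₊λ₋` contractions of the two summands cancel once `δ` is seen to be symmetric
  rw [h1, h2, det_fin_three, isSymm_one.apply i k, isSymm_one.apply j k]
  -- `simp` does not rewrite inside the arguments of the numeral `1`, but does inside `diagonal`
  rw [← diagonal_one]
  simp only [submatrix_apply, Matrix.cons_val]
  ring_nf
  simp only [I_pow_three]
  ring

theorem sum_mul_det_submatrix_one {n : ℕ} (f : Fin n → Fin n → Fin n → ℂ)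
    (a b c : Fin n) :
    ∑ i, ∑ j, ∑ k,
      f i j k * det ((1 : Matrix (Fin n) (Fin n) ℂ).submatrix ![a, b, c] ![i, j, k]) =
      f a b c - f a c b - f b a c + f b c a + f c a b - f c b a := by
  simp only [det_fin_three, ← diagonal_one, submatrix_apply, Matrix.cons_val, diagonal_apply,
    mul_sub, mul_add, Finset.sum_add_distrib, Finset.sum_sub_distrib, mul_ite, mul_one, mul_zero,
    Finset.sum_ite_eq, Finset.mem_univ, if_true, Finset.sum_ite_irrel, Finset.sum_const_zero]
  ring

theorem stmt14 (n : ℕ) (T : Fin n → Fin n → Fin n → ℝ)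
    (hT : ∀ i j k, T i j k = -T j i k) (a b c : Fin n) :
    Matrix.trace (gam n a * gam n b * gam n c *
      ((1 / 2 : ℂ) • ∑ i, ∑ j, ∑ k, (T i j k : ℂ) •
        (lamP n j * lamP n i * lamM n k + lamP n k * lamM n i * lamM n j)))
      = Complex.I * 2 ^ (n - 2) * ((T a b c : ℂ) + (T c a b : ℂ) + (T b c a : ℂ)) := by
  have hT' : ∀ i j k, (T i j k : ℂ) = -T j i k := fun i j k => by rw [hT, Complex.ofReal_neg]
  simp only [Matrix.mul_smul, Matrix.mul_sum, trace_smul, trace_sum, smul_eq_mul,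
    trace_gam_mul_gam_mul_gam_mul_eq_det]
  simp only [mul_left_comm (T _ _ _ : ℂ), ← Finset.mul_sum, sum_mul_det_submatrix_one]
  rw [hT' a c b, hT' b a c, hT' c b a]
  rcases le_or_gt 2 n with hn | hn
  · rw [← pow_sub_mul_pow 2 hn]
    ring
  · -- `n - 2` truncates to `0` here, but then all indices coincide and both sides vanish
    have : Subsingleton (Fin n) := Fin.subsingleton_iff_le_one.mpr (by omega)
    obtain rfl := Subsingleton.elim b a
    obtain rfl := Subsingleton.elim c b
    have hzero : (T c c c : ℂ) = 0 := by linear_combination hT' c c c / 2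
    simp [hzero]
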